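/- arXiv:2409.13472 — 2 statements merged into one kernel-verified Lean document; each statement's English description precedes it below -/
import Mathlib

section
/- (Matrix Tree Theorem) For a finite undirected graph G with edge weights w : E → ℝ_{≥0} and any fixed vertex r, the sum over all spanning trees T of G of ∏_{e ∈ T} w(e) equals det(L_G^{[r]}), where L_G = D - A is the weighted Laplacian and L_G^{[r]} is L_G with the row and column indexed by r deleted. -/
open Finset Classical Polynomial

noncomputable section

variable {V : Type*} [Fintype V] [DecidableEq V]

/-- Product of the edge weights of a graph (used as the weight of a spanning tree). -/
def tw (w : Sym2 V → ℝ) (H : SimpleGraph V) : ℝ := ∏ e ∈ H.edgeSet.toFinset, w e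

/-- The spanning trees of `G`: subgraphs of `G` on all of `V` that are trees. -/
def spanningTrees (G : SimpleGraph V) : Finset (SimpleGraph V) :=
  Finset.univ.filter (fun H => H ≤ G ∧ H.IsTree)

/-- Total weight of all spanning trees (the normalization constant). -/
def Z (G : SimpleGraph V) (w : Sym2 V → ℝ) : ℝ := ∑ H ∈ spanningTrees G, tw w H

/-- Expectation of `f` over a random spanning tree sampled with probability
proportional to the product of its edge weights. -/
def Ex (G : SimpleGraph V) (w : Sym2 V → ℝ) (f : SimpleGraph V → ℝ) : ℝ :=
  ∑ H ∈ spanningTrees G, (tw w H / Z G w) * f H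

/-- Variance of `f` over a random spanning tree. -/
def Var (G : SimpleGraph V) (w : Sym2 V → ℝ) (f : SimpleGraph V → ℝ) : ℝ :=
  Ex G w (fun H => f H ^ 2) - (Ex G w f) ^ 2

/-- ω-weighted degree of `v` in `H` (real degree weights). -/
def degw (ω : Sym2 V → ℝ) (v : V) (H : SimpleGraph V) : ℝ :=
  ∑ e ∈ H.edgeSet.toFinset.filter (fun e => v ∈ e), ω e

/-- ω-weighted degree of `v` in `H` (natural-number degree weights). -/
def degn (ω : Sym2 V → ℕ) (v : V) (H : SimpleGraph V) : ℕ :=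
  ∑ e ∈ H.edgeSet.toFinset.filter (fun e => v ∈ e), ω e

/-- The degree polynomial `P_v(x) = Σ_k (-1)^k w(S_k) x^k`, written as a sum over
spanning trees (grouping the trees by the weighted degree `k` of `v`). -/
def degPoly (G : SimpleGraph V) (w : Sym2 V → ℝ) (ω : Sym2 V → ℕ) (v : V) : Polynomial ℝ :=
  ∑ H ∈ spanningTrees G,
    Polynomial.C ((-1) ^ (degn ω v H) * tw w H) * Polynomial.X ^ (degn ω v H)

/-- Weighted Laplacian `L = D - A` of a simple graph with edge weights `w`. -/
def lap (G : SimpleGraph V) (w : Sym2 V → ℝ) : Matrix V V ℝ :=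
  fun u x => if u = x then ∑ y ∈ Finset.univ.filter (G.Adj u ·), w s(u, y)
    else if G.Adj u x then -w s(u, x) else 0

/-- Delete the row and column indexed by `r`. -/
def del (r : V) (M : Matrix V V ℝ) : Matrix {x : V // x ≠ r} {x : V // x ≠ r} ℝ :=
  M.submatrix Subtype.val Subtype.val

/-- The subgraph of `G` containing only the edges incident to `v`. -/
def inc (G : SimpleGraph V) (v : V) : SimpleGraph V :=
  SimpleGraph.fromRel (fun a b => G.Adj a b ∧ (a = v ∨ b = v))


/-!
Orient every edge and let `N` be the signed vertex–edge incidence matrix with the row of `r`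
deleted. Then `L_G^{[r]} = N · diag(w) · Nᵀ`, and the Cauchy–Binet formula expands its
determinant over the sets `S` of `|V| - 1` edges as `∑_S (∏_{e ∈ S} w e) · det (N_S)²`.
If some vertex `x` is not joined to `r` by edges of `S`, the indicator of the component of `x`
is a left null vector of `N_S`, so `det N_S = 0`. Otherwise `S` is a spanning tree; choosing for
each vertex `v ≠ r` its edge towards `r` makes `N_S` triangular with diagonal entries `±1`
once the vertices are ordered by their distance to `r`, so `det (N_S)² = 1`.
-/

namespace Matrix

variable {m κ R : Type*} [Fintype m] [DecidableEq m] [Fintype κ] [DecidableEq κ] [CommRing R]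

theorem det_mul_eq_sum_injective (A : Matrix m κ R) (B : Matrix κ m R) :
    (A * B).det = ∑ g ∈ univ.filter (fun g : m → κ => g.Injective),
      (∏ i, A i (g i)) * (B.submatrix g id).det := by
  have hrows : (A * B).det = ∑ g : m → κ, (∏ i, A i (g i)) * (B.submatrix g id).det := by
    have hAB : A * B = fun i => ∑ j, A i j • B j := by
      ext i k
      simp [mul_apply]
    rw [hAB]
    change (detRowAlternating : (m → R) [⋀^m]→ₗ[R] R).toMultilinearMap
      (fun i => ∑ j, A i j • B j) = _
    rw [MultilinearMap.map_sum]
    refine sum_congr rfl fun g _ => ?_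
    rw [MultilinearMap.map_smul_univ]
    rfl
  rw [hrows, sum_filter_of_ne fun g _ hg => ?_]
  by_contra hinj
  obtain ⟨i, j, hij, hne⟩ : ∃ i j, g i = g j ∧ i ≠ j := by
    simpa [Function.Injective] using hinj
  exact hg (by rw [det_zero_of_row_eq hne (by ext k; simp [hij]), mul_zero])

theorem sum_injective_range_eq_det_mul_det (A : Matrix m κ R) (B : Matrix κ m R) {g₀ : m → κ}
    (hg₀ : g₀.Injective) :
    ∑ g ∈ univ.filter (fun g : m → κ => g.Injective ∧ Set.range g = Set.range g₀),
      (∏ i, A i (g i)) * (B.submatrix g id).det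
      = (A.submatrix id g₀).det * (B.submatrix g₀ id).det := by
  have hfiber : univ.filter (fun g : m → κ => g.Injective ∧ Set.range g = Set.range g₀)
      = univ.image fun σ : Equiv.Perm m => g₀ ∘ σ := by
    ext g
    simp only [mem_filter, mem_univ, true_and, mem_image]
    constructor
    · rintro ⟨hg, hrange⟩
      refine ⟨(Equiv.ofInjective g hg).trans
        ((Equiv.setCongr hrange).trans (Equiv.ofInjective g₀ hg₀).symm), funext fun i => ?_⟩
      simp [Equiv.apply_ofInjective_symm]
    · rintro ⟨σ, rfl⟩
      exact ⟨hg₀.comp σ.injective, EquivLike.range_comp g₀ σ⟩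
  have hinj : Function.Injective fun σ : Equiv.Perm m => g₀ ∘ σ :=
    fun σ τ h => Equiv.ext fun i => hg₀ (congrFun h i)
  rw [hfiber, sum_image fun σ _ τ _ h => hinj h,
    ← det_transpose (A.submatrix id g₀), det_apply', sum_mul]
  refine sum_congr rfl fun σ _ => ?_
  rw [show B.submatrix (g₀ ∘ σ) id = (B.submatrix g₀ id).submatrix σ id from rfl,
    det_permute]
  simp only [transpose_apply, submatrix_apply, id_eq, Function.comp_apply]
  ring

theorem det_eq_prod_diag_of_ne_zero_lt {α : Type*} [LinearOrder α] (M : Matrix m m R)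
    (b : m → α) (h : ∀ i j, i ≠ j → M i j ≠ 0 → b i < b j) : M.det = ∏ i, M i i := by
  have hM : M.BlockTriangular b := fun i j hji => by
    by_contra hij
    exact (h i j (by rintro rfl; exact lt_irrefl _ hji) hij).not_gt hji
  have hblock : ∀ a, M.toSquareBlock b a = diagonal fun i => M i.1 i.1 := fun a => by
    ext i j
    by_cases hij : i = j
    · subst hij
      simp [toSquareBlock_def]
    · have hb : b i = b j := i.2.trans j.2.symm
      simp only [toSquareBlock_def, of_apply, diagonal_apply_ne _ hij]
      by_contra hne
      exact (h i j (fun h' => hij (Subtype.ext h')) hne).ne hb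
  rw [hM.det, ← prod_fiberwise_of_maps_to (t := univ.image b) (g := b)
    (fun i _ => mem_image_of_mem b (mem_univ i))]
  refine prod_congr rfl fun a _ => ?_
  rw [hblock, det_diagonal, prod_subtype (p := (b · = a)) _ (by simp)]

theorem det_diagonal_mul_transpose_submatrix (A : Matrix m κ R) (d : κ → R) (g : m → κ) :
    ((diagonal d * Aᵀ).submatrix g id).det = (∏ i, d (g i)) * (A.submatrix id g).det := by
  rw [show (diagonal d * Aᵀ).submatrix g id = diagonal (d ∘ g) * (A.submatrix id g)ᵀ by
    ext; simp [diagonal_mul], det_mul, det_diagonal, det_transpose]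
  rfl

end Matrix

lemma Sym2.mk_out {α : Type*} (e : Sym2 α) : s(e.out.1, e.out.2) = e := e.out_eq

lemma Sym2.mem_iff_eq_out {α : Type*} {v : α} {e : Sym2 α} :
    v ∈ e ↔ v = e.out.1 ∨ v = e.out.2 := by
  conv_lhs => rw [← e.mk_out]
  exact Sym2.mem_iff

lemma Sym2.isDiag_iff_out {α : Type*} {e : Sym2 α} : e.IsDiag ↔ e.out.1 = e.out.2 := by
  conv_lhs => rw [← e.mk_out]
  exact Sym2.mk_isDiag_iff

lemma injective_parentEdge {α β : Type*} [Preorder β] {r : α} {p : {x // x ≠ r} → α}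
    {d : α → β} (hp : ∀ v, d (p v) < d v) :
    Function.Injective fun v : {x // x ≠ r} => s(v.1, p v) := by
  intro a b hab
  rcases Sym2.eq_iff.mp hab with ⟨h, -⟩ | ⟨h₁, h₂⟩
  · exact Subtype.ext h
  · have ha := hp a
    rw [h₂, h₁] at ha
    exact (lt_asymm ha (hp b)).elim

section OrientedIncidence

variable {R α : Type*} [DecidableEq α]

variable (R α) in
def orientedIncMatrix [Ring R] : Matrix α (Sym2 α) R :=
  Matrix.of fun v e => (if v = e.out.1 then 1 else 0) - (if v = e.out.2 then 1 else 0)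

variable (R) in
def reducedIncMatrix [Ring R] (r : α) : Matrix {x // x ≠ r} (Sym2 α) R :=
  (orientedIncMatrix R α).submatrix Subtype.val id

section Ring

variable [Ring R]

lemma orientedIncMatrix_apply_of_notMem {v : α} {e : Sym2 α} (h : v ∉ e) :
    orientedIncMatrix R α v e = 0 := by
  rw [Sym2.mem_iff_eq_out, not_or] at h
  simp [orientedIncMatrix, h.1, h.2]

lemma orientedIncMatrix_mul_self {v : α} {e : Sym2 α} (he : ¬e.IsDiag) (hv : v ∈ e) :
    orientedIncMatrix R α v e * orientedIncMatrix R α v e = 1 := by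
  rw [Sym2.isDiag_iff_out] at he
  rcases Sym2.mem_iff_eq_out.mp hv with rfl | rfl <;> simp [orientedIncMatrix, he, Ne.symm he]

lemma orientedIncMatrix_mul_of_ne {u v : α} {e : Sym2 α} (huv : u ≠ v) (hu : u ∈ e)
    (hv : v ∈ e) : orientedIncMatrix R α u e * orientedIncMatrix R α v e = -1 := by
  rcases Sym2.mem_iff_eq_out.mp hu with rfl | rfl <;>
    rcases Sym2.mem_iff_eq_out.mp hv with rfl | rfl <;>
    simp_all [orientedIncMatrix, Ne.symm huv]

lemma sum_mul_orientedIncMatrix [Fintype α] (c : α → R) (e : Sym2 α) :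
    ∑ v, c v * orientedIncMatrix R α v e = c e.out.1 - c e.out.2 := by
  simp [orientedIncMatrix, mul_sub, Finset.sum_sub_distrib]

end Ring

variable [CommRing R]

lemma det_reducedIncMatrix_submatrix_eq_zero [Fintype α] [IsDomain R] {r : α}
    {g : {x // x ≠ r} → Sym2 α} (hg : ¬(SimpleGraph.fromEdgeSet (Set.range g)).Connected) :
    ((reducedIncMatrix R r).submatrix id g).det = 0 := by
  set H := SimpleGraph.fromEdgeSet (Set.range g)
  obtain ⟨x, hx⟩ : ∃ x, ¬H.Reachable r x := by
    by_contra! h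
    exact hg ((H.connected_iff_exists_forall_reachable).mpr ⟨r, h⟩)
  have hxr : x ≠ r := by
    rintro rfl
    exact hx (SimpleGraph.Reachable.refl x)
  set c : α → R := fun y => if H.Reachable x y then 1 else 0
  have hcr : c r = 0 := if_neg fun h => hx h.symm
  rw [← Matrix.exists_vecMul_eq_zero_iff]
  refine ⟨fun v => c v, fun h => by simpa [c] using congrFun h ⟨x, hxr⟩, funext fun i => ?_⟩
  have hsum : ∑ v : {x // x ≠ r}, c v * orientedIncMatrix R α v (g i)
      = ∑ y, c y * orientedIncMatrix R α y (g i) := by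
    rw [← Fintype.sum_subtype_add_sum_subtype (· ≠ r),
      Fintype.sum_eq_zero (α := {x // ¬x ≠ r}), add_zero]
    rintro ⟨y, hy⟩
    obtain rfl : y = r := not_not.mp hy
    rw [hcr, zero_mul]
  simp only [Matrix.vecMul, dotProduct, reducedIncMatrix, Matrix.submatrix_apply, id_eq, hsum,
    Pi.zero_apply,
    sum_mul_orientedIncMatrix, sub_eq_zero]
  by_cases hd : (g i).out.1 = (g i).out.2
  · rw [hd]
  · have hadj : H.Adj (g i).out.1 (g i).out.2 := by
      simp [H, (g i).mk_out, hd]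
    have : H.Reachable x (g i).out.1 ↔ H.Reachable x (g i).out.2 :=
      ⟨fun h => h.trans hadj.reachable, fun h => h.trans hadj.symm.reachable⟩
    simp only [c, this]

lemma det_sq_parentEdge [Fintype α] {β : Type*} [LinearOrder β] {r : α}
    {p : {x // x ≠ r} → α} {d : α → β} (hp : ∀ v, d (p v) < d v) :
    ((reducedIncMatrix R r).submatrix id fun v => s(v.1, p v)).det ^ 2 = 1 := by
  rw [Matrix.det_eq_prod_diag_of_ne_zero_lt _ (fun v : {x // x ≠ r} => d v), ← prod_pow]
  · refine prod_eq_one fun v _ => ?_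
    have hne : v.1 ≠ p v := fun h => (hp v).ne (congrArg d h.symm)
    rw [sq]
    exact orientedIncMatrix_mul_self (by simpa using hne) (Sym2.mem_mk_left _ _)
  · intro i j hij hne
    have hmem : (i : α) ∈ s(j.1, p j) := by
      by_contra h
      exact hne (orientedIncMatrix_apply_of_notMem h)
    rcases Sym2.mem_iff.mp hmem with h | h
    · exact absurd (Subtype.ext h) hij
    · simpa only [h] using hp j

end OrientedIncidence

open Matrix in
lemma lap_eq_orientedIncMatrix_mul (G : SimpleGraph V) (w : Sym2 V → ℝ) :
    lap G w = orientedIncMatrix ℝ V * diagonal (G.edgeSet.indicator w) *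
      (orientedIncMatrix ℝ V)ᵀ := by
  ext u x
  simp only [mul_apply (M := _ * _), mul_diagonal, transpose_apply]
  by_cases hux : u = x
  · subst hux
    rw [lap, if_pos rfl, sum_filter]
    refine Fintype.sum_of_injective (fun y => s(u, y)) (fun y z h => Sym2.congr_right.mp h)
      _ _ (fun e he => ?_) (fun y => ?_)
    · have hu : u ∉ e := fun hu => he ⟨Sym2.Mem.other hu, Sym2.other_spec hu⟩
      simp [orientedIncMatrix_apply_of_notMem hu]
    · by_cases hadj : G.Adj u y
      · rw [if_pos hadj, Set.indicator_of_mem (by exact hadj), mul_assoc, mul_comm (w _),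
          ← mul_assoc, orientedIncMatrix_mul_self (by simpa using hadj.ne) (Sym2.mem_mk_left u y),
          one_mul]
      · rw [if_neg hadj, Set.indicator_of_notMem (by exact hadj), mul_zero, zero_mul]
  · rw [lap, if_neg hux, sum_eq_single s(u, x) (fun e _ he => ?_) (by simp)]
    · rw [mul_assoc, mul_comm (Set.indicator _ _ _), ← mul_assoc,
        orientedIncMatrix_mul_of_ne hux (Sym2.mem_mk_left u x) (Sym2.mem_mk_right u x)]
      by_cases hadj : G.Adj u x
      · rw [if_pos hadj, Set.indicator_of_mem (by exact hadj), neg_one_mul]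
      · rw [if_neg hadj, Set.indicator_of_notMem (by exact hadj), mul_zero]
    · have : ¬(u ∈ e ∧ x ∈ e) := fun h => he ((Sym2.mem_and_mem_iff hux).mp h)
      rcases not_and_or.mp this with h | h <;>
        simp [orientedIncMatrix_apply_of_notMem h]

lemma Nat.card_subtype_ne_add_one (r : V) : Nat.card {x // x ≠ r} + 1 = Nat.card V := by
  simp only [Nat.card_eq_fintype_card, Fintype.card_subtype_compl, Fintype.card_unique]
  have := Fintype.card_pos_iff.mpr ⟨r⟩
  omega

lemma SimpleGraph.edgeSet_fromEdgeSet_of_subset {α : Type*} {G : SimpleGraph α}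
    {s : Set (Sym2 α)} (hs : s ⊆ G.edgeSet) : (SimpleGraph.fromEdgeSet s).edgeSet = s := by
  rw [SimpleGraph.edgeSet_fromEdgeSet, sdiff_eq_left]
  exact Set.disjoint_left.mpr fun e he => G.not_isDiag_of_mem_edgeSet (hs he)

lemma SimpleGraph.Connected.exists_adj_dist_lt {α : Type*} {H : SimpleGraph α} (hH : H.Connected)
    {r v : α} (hv : v ≠ r) : ∃ u, H.Adj v u ∧ H.dist u r < H.dist v r := by
  obtain ⟨q, hq⟩ := (hH v r).exists_walk_length_eq_dist
  cases q with
  | nil => exact absurd rfl hv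
  | cons h q =>
    refine ⟨_, h, ?_⟩
    rw [SimpleGraph.Walk.length_cons] at hq
    have := SimpleGraph.dist_le q
    omega

lemma SimpleGraph.IsTree.exists_injective_range_eq_edgeSet {R : Type*} [CommRing R]
    {H : SimpleGraph V} (hH : H.IsTree) (r : V) :
    ∃ φ : {x // x ≠ r} → Sym2 V, φ.Injective ∧ Set.range φ = H.edgeSet ∧
      ((reducedIncMatrix R r).submatrix id φ).det ^ 2 = 1 := by
  choose p hadj hdist using fun v : {x // x ≠ r} => hH.connected.exists_adj_dist_lt v.2
  have hinj := injective_parentEdge (d := (H.dist · r)) hdist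
  refine ⟨_, hinj, ?_, det_sq_parentEdge (d := (H.dist · r)) hdist⟩
  refine Set.eq_of_subset_of_ncard_le (Set.range_subset_iff.mpr hadj) ?_ (Set.toFinite _)
  rw [Set.ncard_range_of_injective hinj, ← Nat.card_coe_set_eq]
  have := (SimpleGraph.isTree_iff_connected_and_card.mp hH).2
  have := Nat.card_subtype_ne_add_one r
  omega

lemma fromEdgeSet_range_mem_spanningTrees {G : SimpleGraph V} {r : V}
    {g : {x // x ≠ r} → Sym2 V} (hinj : g.Injective) (hG : Set.range g ⊆ G.edgeSet)
    (hc : (SimpleGraph.fromEdgeSet (Set.range g)).Connected) :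
    SimpleGraph.fromEdgeSet (Set.range g) ∈ spanningTrees G := by
  simp only [spanningTrees, mem_filter, mem_univ, true_and]
  refine ⟨(G.fromEdgeSet_le).mpr (Set.sdiff_subset.trans hG),
    SimpleGraph.isTree_iff_connected_and_card.mpr ⟨hc, ?_⟩⟩
  rw [SimpleGraph.edgeSet_fromEdgeSet_of_subset hG, Nat.card_coe_set_eq,
    Set.ncard_range_of_injective hinj, Nat.card_subtype_ne_add_one]

section CauchyBinetTerms

open Matrix SimpleGraph

variable {G : SimpleGraph V} {r : V}

lemma del_lap_eq_mul (w : Sym2 V → ℝ) :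
    del r (lap G w) = reducedIncMatrix ℝ r *
      (diagonal (G.edgeSet.indicator w) * (reducedIncMatrix ℝ r)ᵀ) := by
  rw [del, lap_eq_orientedIncMatrix_mul, Matrix.mul_assoc,
    submatrix_mul _ _ _ id _ Function.bijective_id]
  rfl

lemma range_subset_edgeSet_and_connected_of_ne_zero {R : Type*} [CommRing R] [IsDomain R]
    {w : Sym2 V → R} {g : {x // x ≠ r} → Sym2 V}
    (h : (∏ i, G.edgeSet.indicator w (g i)) * ((reducedIncMatrix R r).submatrix id g).det ≠ 0) :
    Set.range g ⊆ G.edgeSet ∧ (fromEdgeSet (Set.range g)).Connected := by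
  refine ⟨Set.range_subset_iff.mpr fun i => ?_, ?_⟩
  · by_contra hi
    exact h (by rw [prod_eq_zero (mem_univ i) (Set.indicator_of_notMem hi w), zero_mul])
  · by_contra hc
    exact h (by rw [det_reducedIncMatrix_submatrix_eq_zero hc, mul_zero])

lemma sum_injective_onto_edgeSet_eq_tw {H : SimpleGraph V} (hH : H ∈ spanningTrees G)
    (w : Sym2 V → ℝ) :
    ∑ g ∈ univ.filter (fun g : {x // x ≠ r} → Sym2 V =>
        g.Injective ∧ Set.range g = H.edgeSet),
      (∏ i, reducedIncMatrix ℝ r i (g i)) *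
        ((diagonal (G.edgeSet.indicator w) * (reducedIncMatrix ℝ r)ᵀ).submatrix g id).det
      = tw w H := by
  simp only [spanningTrees, mem_filter, mem_univ, true_and] at hH
  obtain ⟨φ, hφ, hrange, hdet⟩ := hH.2.exists_injective_range_eq_edgeSet (R := ℝ) r
  have htw : tw w H = ∏ i, G.edgeSet.indicator w (φ i) := by
    rw [tw, ← prod_image fun i _ j _ h => hφ h,
      show univ.image φ = H.edgeSet.toFinset by ext e; simp [← hrange]]
    exact prod_congr rfl fun e he =>
      (Set.indicator_of_mem (edgeSet_mono hH.1 (Set.mem_toFinset.mp he)) w).symm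
  rw [← hrange, sum_injective_range_eq_det_mul_det _ _ hφ,
    det_diagonal_mul_transpose_submatrix, htw]
  linear_combination (∏ i, G.edgeSet.indicator w (φ i)) * hdet

end CauchyBinetTerms

open Matrix SimpleGraph in
theorem stmt3_general (G : SimpleGraph V) (w : Sym2 V → ℝ) (r : V) :
    ∑ H ∈ spanningTrees G, tw w H = (del r (lap G w)).det := by
  rw [del_lap_eq_mul, det_mul_eq_sum_injective,
    ← sum_filter_of_ne (p := fun g => Set.range g ⊆ G.edgeSet ∧
      (fromEdgeSet (Set.range g)).Connected) fun g _ hne => ?vanish,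
    ← sum_fiberwise_of_maps_to (g := fun g => fromEdgeSet (Set.range g)) (t := spanningTrees G)
      fun g hg => ?mapsTo]
  case vanish =>
    rw [det_diagonal_mul_transpose_submatrix] at hne
    exact range_subset_edgeSet_and_connected_of_ne_zero (right_ne_zero_of_mul hne)
  case mapsTo =>
    simp only [mem_filter, mem_univ, true_and] at hg
    exact fromEdgeSet_range_mem_spanningTrees hg.1 hg.2.1 hg.2.2
  refine sum_congr rfl fun H hH => ?_
  rw [← sum_injective_onto_edgeSet_eq_tw hH w]
  refine sum_congr (Finset.ext fun g => ?_) fun _ _ => rfl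
  simp only [spanningTrees, mem_filter, mem_univ, true_and] at hH ⊢
  refine ⟨fun ⟨hg, hgH⟩ => ⟨⟨hg, ?_, ?_⟩, ?_⟩,
    fun ⟨⟨hg, hG, _⟩, hgH⟩ => ⟨hg, ?_⟩⟩
  · exact hgH ▸ edgeSet_mono hH.1
  · rw [hgH, fromEdgeSet_edgeSet]
    exact hH.2.connected
  · rw [hgH, fromEdgeSet_edgeSet]
  · rw [← edgeSet_fromEdgeSet_of_subset hG, hgH]

/-- Matrix Tree Theorem: the total spanning-tree weight equals
`det(L_G^{[r]})`. -/
theorem stmt3 (G : SimpleGraph V) (w : Sym2 V → ℝ) (hw : ∀ e ∈ G.edgeSet, 0 ≤ w e)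
    (r : V) :
    ∑ H ∈ spanningTrees G, tw w H = (del r (lap G w)).det :=
  stmt3_general G w r
end
end

section
/- For a finite connected weighted graph G, a node v, degree weights ω, α > 0 and a fixed vertex r, the determinant det(L_{G_α}^{[r]}) equals P_v(-α), where G_α is G with each edge e incident to v rescaled by α^{ω(e)} and P_v(x) = Σ_k (-1)^k w(S_k) x^k is the degree polynomial of v. -/
open Finset Classical Polynomial

noncomputable section

variable {V : Type*} [Fintype V] [DecidableEq V]

/-!
By the matrix-tree theorem, `det L_{G_α}^{[r]}` is the sum over spanning trees `T` of
`∏_{e ∈ T} w_α(e) = α ^ deg_ω(v, T) * w(T)`, which is `P_v(-α)`.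

For the matrix-tree theorem, row `u` of the reduced Laplacian is `∑_{y ~ u} w(uy) (e_u - e_y)`
(with `e_r = 0`), so multilinearity expands the determinant over the maps `f` choosing a neighbour
`f u` of every `u ≠ r`, the term of `f` being `∏ w(u, f u)` times the determinant of the matrix
with rows `e_u - e_{f u}`. If iterating `f` brings every vertex to `r`, that matrix is
unitriangular for the order "number of steps needed to reach `r`"; otherwise the indicator of
the vertices that never reach `r` is in its kernel. The maps of the first kind are exactly the
parent maps of the spanning trees oriented towards `r`.
-/

section Grounded

variable {α : Type*}

def Grounded (r : α) (F : α → α) : Prop := ∀ x, ∃ k, F^[k] x = r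

def extendRoot (r : α) (f : {x : α // x ≠ r} → α) : α → α :=
  fun x => if h : x = r then r else f ⟨x, h⟩

variable {r : α} {F : α → α}

theorem grounded_iff_exists_rank :
    Grounded r F ↔ ∃ μ : α → ℕ, ∀ x ≠ r, μ (F x) < μ x := by
  constructor
  · intro hg
    refine ⟨fun x => Nat.find (hg x), fun x hx => ?_⟩
    have hpos : Nat.find (hg x) ≠ 0 := fun h0 => hx (by simpa [h0] using Nat.find_spec (hg x))
    refine (Nat.find_le ?_).trans_lt (Nat.pred_lt hpos)
    rw [← Function.iterate_succ_apply, Nat.succ_pred hpos]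
    exact Nat.find_spec (hg x)
  · rintro ⟨μ, hμ⟩ x
    induction hx : μ x using Nat.strong_induction_on generalizing x with
    | _ n ih =>
      by_cases hxr : x = r
      · exact ⟨0, hxr⟩
      · obtain ⟨k, hk⟩ := ih _ (hx ▸ hμ x hxr) (F x) rfl
        exact ⟨k + 1, hk⟩

theorem exists_iterate_apply_eq_iff {x : α} (hx : x ≠ r) :
    (∃ k, F^[k] (F x) = r) ↔ ∃ k, F^[k] x = r := by
  constructor
  · rintro ⟨k, hk⟩
    exact ⟨k + 1, hk⟩
  · rintro ⟨_ | k, hk⟩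
    · exact absurd hk hx
    · exact ⟨k, hk⟩

theorem Grounded.notMem_of_mapsTo (hg : Grounded r F) {S : Set α} (hS : Set.MapsTo F S S)
    (hr : r ∉ S) (x : α) : x ∉ S := fun hx =>
  let ⟨k, hk⟩ := hg x
  hr (hk ▸ hS.iterate k hx)

theorem Grounded.eq_of_isPeriodicPt (hg : Grounded r F) (hr : Function.IsFixedPt F r) {n : ℕ}
    (hn : 0 < n) {x : α} (hx : Function.IsPeriodicPt F n x) : x = r := by
  obtain ⟨k, hk⟩ := hg x
  calc x = F^[n * k] x := (hx.mul_const k).eq.symm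
    _ = F^[n * k - k] (F^[k] x) := by
      rw [← Function.iterate_add_apply, Nat.sub_add_cancel (Nat.le_mul_of_pos_left k hn)]
    _ = r := by rw [hk]; exact (hr.iterate _).eq

variable {f : {x : α // x ≠ r} → α}

theorem extendRoot_of_ne {x : α} (hx : x ≠ r) : extendRoot r f x = f ⟨x, hx⟩ :=
  dif_neg hx

@[simp]
theorem extendRoot_apply (u : {x : α // x ≠ r}) : extendRoot r f u = f u :=
  dif_neg u.2

theorem isFixedPt_extendRoot : Function.IsFixedPt (extendRoot r f) r :=
  dif_pos rfl

theorem grounded_extendRoot_iff :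
    Grounded r (extendRoot r f) ↔ ∃ μ : α → ℕ, ∀ u : {x : α // x ≠ r}, μ (f u) < μ u := by
  rw [grounded_iff_exists_rank]
  refine exists_congr fun μ => ⟨fun h u => by simpa using h u u.2, fun h x hx => ?_⟩
  rw [extendRoot_of_ne hx]
  exact h ⟨x, hx⟩

theorem Grounded.apply_ne (hf : Grounded r (extendRoot r f)) (u : {x : α // x ≠ r}) :
    f u ≠ u := fun h =>
  u.2 <| hf.eq_of_isPeriodicPt isFixedPt_extendRoot one_pos <| by
    simpa [Function.IsPeriodicPt, Function.IsFixedPt] using h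

theorem Grounded.apply_ne_of_apply_eq (hf : Grounded r (extendRoot r f))
    {u v : {x : α // x ≠ r}} (huv : f u = v) : f v ≠ u := fun hvu =>
  u.2 <| hf.eq_of_isPeriodicPt isFixedPt_extendRoot two_pos <| by
    show extendRoot r f (extendRoot r f u) = u
    rw [extendRoot_apply, huv, extendRoot_apply, hvu]

end Grounded

theorem SimpleGraph.Reachable.exists_adj_dist_lt {α : Type*} {G : SimpleGraph α} {u v : α}
    (h : G.Reachable u v) (hne : u ≠ v) : ∃ y, G.Adj u y ∧ G.dist y v < G.dist u v := by
  obtain ⟨p, hp⟩ := h.exists_walk_length_eq_dist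
  cases p with
  | nil => exact absurd rfl hne
  | cons hadj q => exact ⟨_, hadj, (SimpleGraph.dist_le q).trans_lt (by simp [← hp])⟩

section ParentMatrix

open scoped Matrix

variable (r : V)

def edgeRow (u : {x : V // x ≠ r}) (y : V) : {x : V // x ≠ r} → ℝ :=
  fun x => (if x = u then 1 else 0) - (if (x : V) = y then 1 else 0)

def parentMatrix (f : {x : V // x ≠ r} → V) : Matrix {x : V // x ≠ r} {x : V // x ≠ r} ℝ :=
  Matrix.of fun u => edgeRow r u (f u)

theorem del_lap_row (G : SimpleGraph V) (w : Sym2 V → ℝ) (u : {x : V // x ≠ r}) :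
    del r (lap G w) u = ∑ y ∈ univ.filter (G.Adj u.1 ·), w s(u.1, y) • edgeRow r u y := by
  funext x
  simp only [del, lap, Matrix.submatrix_apply, Finset.sum_apply, edgeRow, Pi.smul_apply,
    smul_eq_mul, mul_sub, mul_ite, mul_one, mul_zero, Finset.sum_sub_distrib]
  rcases eq_or_ne x u with rfl | hxu
  · simp [Finset.sum_ite_eq]
  · simp only [hxu, Subtype.coe_ne_coe.2 hxu.symm, Finset.sum_ite_eq]
    split_ifs <;> simp_all

theorem det_del_lap (G : SimpleGraph V) (w : Sym2 V → ℝ) :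
    (del r (lap G w)).det =
      ∑ f ∈ Fintype.piFinset (fun u : {x : V // x ≠ r} => univ.filter (G.Adj u.1 ·)),
        (∏ u, w s(u.1, f u)) * (parentMatrix r f).det := by
  rw [show del r (lap G w) = _ from funext (del_lap_row r G w)]
  show Matrix.detRowAlternating.toMultilinearMap _ = _
  rw [MultilinearMap.map_sum_finset]
  refine Finset.sum_congr rfl fun f _ => ?_
  rw [MultilinearMap.map_smul_univ, smul_eq_mul]
  rfl

variable {r}

theorem parentMatrix_mulVec (f : {x : V // x ≠ r} → V) {g : V → ℝ} (hg : g r = 0) :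
    parentMatrix r f *ᵥ (fun x => g x) = fun u : {x : V // x ≠ r} => g u - g (f u) := by
  funext u
  have hsum : ∑ x : {x : V // x ≠ r}, (if (x : V) = f u then g x else 0) = g (f u) := by
    simpa [hg] using
      (Fintype.sum_eq_add_sum_subtype_ne (fun z => if z = f u then g z else 0) r).symm
  simp only [Matrix.mulVec, dotProduct, parentMatrix, Matrix.of_apply, edgeRow, sub_mul, ite_mul,
    one_mul, zero_mul, Finset.sum_sub_distrib, Finset.sum_ite_eq', Finset.mem_univ, if_true, hsum]

theorem det_parentMatrix_of_not_grounded (f : {x : V // x ≠ r} → V)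
    (hf : ¬ Grounded r (extendRoot r f)) : (parentMatrix r f).det = 0 := by
  set g : V → ℝ := fun z => if ∃ k, (extendRoot r f)^[k] z = r then 0 else 1
  rw [← Matrix.exists_mulVec_eq_zero_iff]
  refine ⟨fun x => g x, fun h0 => ?_, ?_⟩
  · obtain ⟨x, hx⟩ := not_forall.1 hf
    have hxr : x ≠ r := fun h => hx ⟨0, h⟩
    have := congrFun h0 ⟨x, hxr⟩
    simp [g, hx] at this
  · rw [parentMatrix_mulVec f (g := g) (if_pos ⟨0, rfl⟩)]
    funext u
    have := exists_iterate_apply_eq_iff (F := extendRoot r f) u.2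
    rw [extendRoot_apply] at this
    simp [g, this]

theorem det_parentMatrix_of_grounded (f : {x : V // x ≠ r} → V)
    (hf : Grounded r (extendRoot r f)) : (parentMatrix r f).det = 1 := by
  obtain ⟨μ, hμf⟩ := grounded_extendRoot_iff.1 hf
  have htri : (parentMatrix r f).BlockTriangular fun u => OrderDual.toDual (μ u) := by
    intro i j (hij : μ i < μ j)
    have hji : j ≠ i := by rintro rfl; exact lt_irrefl _ hij
    have hjf : (j : V) ≠ f i := fun h => (hμf i).not_ge (h ▸ hij.le)
    simp [parentMatrix, edgeRow, hji, hjf]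
  rw [htri.det]
  refine Finset.prod_eq_one fun a _ => ?_
  have hblock : (parentMatrix r f).toSquareBlock (fun u => OrderDual.toDual (μ u)) a = 1 := by
    ext ⟨i, hi⟩ ⟨j, hj⟩
    have hjf : (j : V) ≠ f i := fun h => (hμf i).ne (h ▸ (hj.trans hi.symm :))
    simp [Matrix.toSquareBlock, Matrix.toSquareBlockProp, Matrix.toBlock, Matrix.one_apply,
      parentMatrix, edgeRow, hjf, eq_comm]
  rw [hblock, Matrix.det_one]

end ParentMatrix

section ParentGraph

variable {α : Type*}

def parentGraph (r : α) (f : {x : α // x ≠ r} → α) : SimpleGraph α :=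
  SimpleGraph.fromEdgeSet (Set.range fun u => s(u.1, f u))

variable {r : α} {f g : {x : α // x ≠ r} → α}

theorem parentGraph_le {G : SimpleGraph α} (hf : ∀ u : {x : α // x ≠ r}, G.Adj u (f u)) :
    parentGraph r f ≤ G := by
  rw [parentGraph, SimpleGraph.fromEdgeSet_le]
  rintro _ ⟨⟨u, rfl⟩, -⟩
  exact hf u

theorem Grounded.injective_parentEdge (hf : Grounded r (extendRoot r f)) :
    Function.Injective fun u => s(u.1, f u) := by
  intro u v huv
  rcases Sym2.eq_iff.1 huv with ⟨h, -⟩ | ⟨hu, hv⟩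
  · exact Subtype.ext h
  · exact absurd hu.symm (hf.apply_ne_of_apply_eq hv)

theorem Grounded.edgeSet_parentGraph (hf : Grounded r (extendRoot r f)) :
    (parentGraph r f).edgeSet = Set.range fun u => s(u.1, f u) := by
  rw [parentGraph, SimpleGraph.edgeSet_fromEdgeSet, sdiff_eq_left, Set.disjoint_right]
  rintro _ hdiag ⟨u, rfl⟩
  exact hf.apply_ne u (Sym2.mk_isDiag_iff.1 hdiag).symm

theorem Grounded.parentGraph_adj (hf : Grounded r (extendRoot r f)) (u : {x : α // x ≠ r}) :
    (parentGraph r f).Adj u (f u) := by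
  rw [← SimpleGraph.mem_edgeSet, hf.edgeSet_parentGraph]
  exact ⟨u, rfl⟩

theorem Grounded.parentGraph_connected (hf : Grounded r (extendRoot r f)) :
    (parentGraph r f).Connected := by
  have hreach : ∀ x, (parentGraph r f).Reachable x r := by
    intro x
    obtain ⟨k, hk⟩ := hf x
    induction k generalizing x with
    | zero =>
      obtain rfl : x = r := hk
      rfl
    | succ k ih =>
      by_cases hx : x = r
      · rw [hx]
      · rw [Function.iterate_succ_apply, extendRoot_of_ne hx] at hk
        exact (hf.parentGraph_adj ⟨x, hx⟩).reachable.trans (ih _ hk)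
  exact (SimpleGraph.connected_iff _).2 ⟨fun a b => (hreach a).trans (hreach b).symm, ⟨r⟩⟩

theorem Grounded.eq_of_parentGraph_eq (hf : Grounded r (extendRoot r f))
    (hg : Grounded r (extendRoot r g)) (h : parentGraph r f = parentGraph r g) : f = g := by
  by_contra hne
  obtain ⟨u, hu⟩ := Function.ne_iff.1 hne
  refine hf.notMem_of_mapsTo (S := {x | ∃ hx : x ≠ r, f ⟨x, hx⟩ ≠ g ⟨x, hx⟩}) ?_
    (fun ⟨hr, _⟩ => hr rfl) u ⟨u.2, hu⟩
  rintro x ⟨hx, hfg⟩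
  obtain ⟨v, hv⟩ : s(x, f ⟨x, hx⟩) ∈ Set.range fun v => s(v.1, g v) := by
    rw [← hg.edgeSet_parentGraph, ← h]
    exact hf.parentGraph_adj ⟨x, hx⟩
  rcases Sym2.eq_iff.1 hv with ⟨hvx, hgv⟩ | ⟨hvf, hgv⟩
  · obtain rfl : v = ⟨x, hx⟩ := Subtype.ext hvx
    exact absurd hgv.symm hfg
  · rw [extendRoot_of_ne hx, ← hvf]
    exact ⟨v.2, fun hfv => hf.apply_ne_of_apply_eq hvf.symm (hfv.trans hgv)⟩

theorem SimpleGraph.IsTree.exists_parentGraph_eq {H : SimpleGraph α} (hH : H.IsTree) (r : α) :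
    ∃ f : {x : α // x ≠ r} → α, Grounded r (extendRoot r f) ∧
      (∀ u : {x : α // x ≠ r}, H.Adj u (f u)) ∧ parentGraph r f = H := by
  choose f hadj hdist using fun u : {x : α // x ≠ r} =>
    (hH.connected.preconnected u r).exists_adj_dist_lt u.2
  have hf : Grounded r (extendRoot r f) := grounded_extendRoot_iff.2 ⟨(H.dist · r), hdist⟩
  refine ⟨f, hf, hadj, le_antisymm (parentGraph_le hadj) ?_⟩
  exact (SimpleGraph.isTree_iff_minimal_connected.1 hH).2 hf.parentGraph_connected
    (parentGraph_le hadj)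

end ParentGraph

section ParentTree

variable {r : V} {f : {x : V // x ≠ r} → V}

theorem Grounded.parentGraph_isTree (hf : Grounded r (extendRoot r f)) :
    (parentGraph r f).IsTree := by
  rw [SimpleGraph.isTree_iff_connected_and_card, hf.edgeSet_parentGraph,
    Nat.card_range_of_injective hf.injective_parentEdge, ← Finite.card_option,
    Nat.card_congr (Equiv.optionSubtypeNe r)]
  exact ⟨hf.parentGraph_connected, rfl⟩

theorem Grounded.tw_parentGraph (hf : Grounded r (extendRoot r f)) (w : Sym2 V → ℝ) :
    tw w (parentGraph r f) = ∏ u, w s(u.1, f u) := by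
  rw [tw, Set.toFinset_congr hf.edgeSet_parentGraph, Set.toFinset_range,
    Finset.prod_image hf.injective_parentEdge.injOn]

end ParentTree


theorem det_del_lap_eq_sum_spanningTrees (G : SimpleGraph V) (w : Sym2 V → ℝ) (r : V) :
    (del r (lap G w)).det = ∑ H ∈ spanningTrees G, tw w H := by
  have hterm : ∀ f : {x : V // x ≠ r} → V, (∏ u, w s(u.1, f u)) * (parentMatrix r f).det =
      if Grounded r (extendRoot r f) then ∏ u, w s(u.1, f u) else 0 := by
    intro f
    split_ifs with hf
    · rw [det_parentMatrix_of_grounded f hf, mul_one]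
    · rw [det_parentMatrix_of_not_grounded f hf, mul_zero]
  rw [det_del_lap, Finset.sum_congr rfl fun f _ => hterm f, ← Finset.sum_filter]
  refine Finset.sum_bij (fun f _ => parentGraph r f) ?_ ?_ ?_ ?_
  · intro f hf
    obtain ⟨hN, hf⟩ := Finset.mem_filter.1 hf
    refine Finset.mem_filter.2
      ⟨Finset.mem_univ _, parentGraph_le fun u => ?_, hf.parentGraph_isTree⟩
    exact (Finset.mem_filter.1 (Fintype.mem_piFinset.1 hN u)).2
  · intro f hf g hg h
    exact (Finset.mem_filter.1 hf).2.eq_of_parentGraph_eq (Finset.mem_filter.1 hg).2 h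
  · intro H hH
    obtain ⟨-, hHG, hH⟩ := Finset.mem_filter.1 hH
    obtain ⟨f, hf, hadj, rfl⟩ := hH.exists_parentGraph_eq r
    refine ⟨f, Finset.mem_filter.2 ⟨Fintype.mem_piFinset.2 fun u => ?_, hf⟩, rfl⟩
    exact Finset.mem_filter.2 ⟨Finset.mem_univ _, hHG (hadj u)⟩
  · intro f hf
    exact ((Finset.mem_filter.1 hf).2.tw_parentGraph w).symm

theorem tw_rescale (w : Sym2 V → ℝ) (ω : Sym2 V → ℕ) (v : V) (α : ℝ) (H : SimpleGraph V) :
    tw (fun e => if v ∈ e then α ^ ω e * w e else w e) H = α ^ degn ω v H * tw w H := by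
  rw [tw, tw, degn, Finset.prod_ite, Finset.prod_mul_distrib, Finset.prod_pow_eq_pow_sum,
    ← Finset.prod_filter_mul_prod_filter_not H.edgeSet.toFinset (fun e => v ∈ e) w]
  ring

theorem stmt4_general (G : SimpleGraph V) (w : Sym2 V → ℝ) (ω : Sym2 V → ℕ) (v : V) (α : ℝ)
    (r : V) :
    (del r (lap G (fun e => if v ∈ e then α ^ ω e * w e else w e))).det =
      (degPoly G w ω v).eval (-α) := by
  rw [det_del_lap_eq_sum_spanningTrees, degPoly, Polynomial.eval_finsetSum]
  refine Finset.sum_congr rfl fun H _ => ?_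
  rw [tw_rescale]
  simp only [eval_mul, eval_C, eval_pow, eval_X]
  rw [neg_pow α, mul_mul_mul_comm, ← mul_pow, neg_one_mul, neg_neg, one_pow, one_mul, mul_comm]

/-- `det(L_{G_α}^{[r]}) = P_v(-α)` where `G_α` rescales each edge incident
to `v` by `α^{ω(e)}`. -/
theorem stmt4 (G : SimpleGraph V) (hG : G.Connected) (w : Sym2 V → ℝ)
    (hw : ∀ e ∈ G.edgeSet, 0 < w e) (ω : Sym2 V → ℕ) (v : V) (α : ℝ) (hα : 0 < α)
    (r : V) :
    (del r (lap G (fun e => if v ∈ e then α ^ ω e * w e else w e))).det =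
      (degPoly G w ω v).eval (-α) :=
  stmt4_general G w ω v α r
end
end
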